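/- arXiv:1903.09549 — 4 statements merged into one kernel-verified Lean document; each statement's English description precedes it below -/
import Mathlib

section
/- Let X be a real Banach space, let P : X → X be a continuous linear projection (P ∘ P = P) whose range is subprojective, and let Z be a closed subspace of X such that P(Z) ⊆ Z and such that Z ∩ ker P is subprojective with respect to X. Then Z is subprojective with respect to X. -/
/-- A real normed space `X` is *subprojective* if every closed infinite-dimensional
subspace of `X` contains an infinite-dimensional closed subspace that is
complemented in `X`. -/
def Subprojective (X : Type*) [NormedAddCommGroup X] [NormedSpace ℝ X] : Prop :=
  ∀ M : Submodule ℝ X, IsClosed (M : Set X) → ¬ FiniteDimensional ℝ M →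
    ∃ N : Submodule ℝ X, N ≤ M ∧ IsClosed (N : Set X) ∧ ¬ FiniteDimensional ℝ N ∧
      N.ClosedComplemented

/-- A subspace `Z` of `X` is *subprojective with respect to `X`* if every closed
infinite-dimensional subspace of `Z` contains an infinite-dimensional closed
subspace that is complemented in `X`. -/
def SubprojectiveWrt {X : Type*} [NormedAddCommGroup X] [NormedSpace ℝ X]
    (Z : Submodule ℝ X) : Prop :=
  ∀ M : Submodule ℝ X, M ≤ Z → IsClosed (M : Set X) → ¬ FiniteDimensional ℝ M →
    ∃ N : Submodule ℝ X, N ≤ M ∧ IsClosed (N : Set X) ∧ ¬ FiniteDimensional ℝ N ∧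
      N.ClosedComplemented

/-
If `P` is an isomorphism on a closed infinite-dimensional `M' ≤ M ≤ Z`, then `P M'` is a closed
infinite-dimensional subspace of the complemented subprojective space `range P`, so it contains
some `N` complemented in `X`, and `M' ∩ P⁻¹ N ≅ N` is complemented in `X` as well.
Otherwise `P` is strictly singular on `M`, and Mazur's construction of a basic sequence with small
`P`-images yields a closed infinite-dimensional `M' ≤ M` with `‖P x‖ ≤ ‖x‖ / 2` on `M'`. Then
`1 - P` is an isomorphism on `M'` with values in `Z ⊓ ker P`, and the same pull-back applies.
-/

open Submodule Finset NNReal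

def IsBoundedBelowOn {X Y : Type*} [NormedAddCommGroup X] [NormedSpace ℝ X]
    [NormedAddCommGroup Y] [NormedSpace ℝ Y] (T : X →L[ℝ] Y) (M : Submodule ℝ X) : Prop :=
  ∃ C : ℝ≥0, ∀ x ∈ M, ‖x‖ ≤ C * ‖T x‖

section LinearAlgebra

variable {K V : Type*} [DivisionRing K] [AddCommGroup V] [Module K V]

lemma Submodule.not_finiteDimensional_inf {M W : Submodule K V} (hM : ¬ FiniteDimensional K M)
    [FiniteDimensional K (V ⧸ W)] : ¬ FiniteDimensional K ↥(M ⊓ W) := by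
  intro hMW
  refine hM (Module.Finite.iff_fg.mpr (fg_of_fg_map_of_fg_inf_ker W.mkQ ?_ ?_))
  · exact IsNoetherian.noetherian _
  · rwa [ker_mkQ, ← Module.Finite.iff_fg]

lemma exists_seq_forall_span_image_range (P : ℕ → Submodule K V → V → Prop)
    (h : ∀ n (F : Submodule K V), FiniteDimensional K F → ∃ x, P n F x) :
    ∃ e : ℕ → V, ∀ n, P n (span K (e '' range n)) (e n) := by
  choose! x hx using h
  let G : ℕ → Submodule K V := fun n => Nat.rec ⊥ (fun k Gk => Gk ⊔ K ∙ x k Gk) n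
  have hG : ∀ n, G n = span K ((fun k => x k (G k)) '' range n) := by
    intro n
    induction n with
    | zero => simp [G]
    | succ n ih =>
      rw [range_add_one, coe_insert, Set.image_insert_eq, span_insert, ← ih, sup_comm]
  refine ⟨fun n => x n (G n), fun n => ?_⟩
  rw [← hG]
  exact hx n (G n) (hG n ▸ FiniteDimensional.span_of_finite K ((range n).finite_toSet.image _))

lemma Finsupp.exists_linearCombination_eq_sum_range {R M : Type*} [Semiring R] [AddCommMonoid M]
    [Module R M] (v : ℕ → M) (l : ℕ →₀ R) :
    ∃ n, l.support ⊆ range n ∧ Finsupp.linearCombination R v l = ∑ k ∈ range n, l k • v k := by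
  obtain ⟨n, hn⟩ := exists_nat_subset_range l.support
  exact ⟨n, hn, Finsupp.linearCombination_apply_of_mem_supported R
    ((Finsupp.mem_supported R l).2 (coe_subset.2 hn))⟩

lemma LinearIndependent.not_finiteDimensional_of_forall_mem {ι : Type*} [Infinite ι] {v : ι → V}
    (hv : LinearIndependent K v) {M : Submodule K V} (hvM : ∀ i, v i ∈ M) :
    ¬ FiniteDimensional K M := fun _ =>
  Module.Finite.not_linearIndependent_of_infinite (fun i => (⟨v i, hvM i⟩ : M))
    (LinearIndependent.of_comp M.subtype hv)

end LinearAlgebra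

section

variable {X Y : Type*} [NormedAddCommGroup X] [NormedSpace ℝ X]
  [NormedAddCommGroup Y] [NormedSpace ℝ Y]

lemma ContinuousLinearMap.HasLeftInverse.exists_le_closedComplemented {E : Type*}
    [NormedAddCommGroup E] [NormedSpace ℝ E] {f : E →L[ℝ] X} (hf : f.HasLeftInverse)
    (hE : ¬ FiniteDimensional ℝ E) {M : Submodule ℝ X} (hfM : ∀ x, f x ∈ M) :
    ∃ N ≤ M, IsClosed (N : Set X) ∧ ¬ FiniteDimensional ℝ N ∧ N.ClosedComplemented := by
  refine ⟨LinearMap.range (f : E →ₗ[ℝ] X), ?_, ?_, ?_, hf.closedComplemented_range⟩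
  · rintro _ ⟨x, rfl⟩
    exact hfM x
  · simpa only [LinearMap.coe_range, ContinuousLinearMap.coe_coe] using hf.isClosed_range
  · exact fun h => hE (LinearEquiv.ofInjective _ hf.injective).symm.finiteDimensional

lemma Submodule.ClosedComplemented.subprojectiveWrt {R : Submodule ℝ X}
    (hR : R.ClosedComplemented) (h : Subprojective R) : SubprojectiveWrt R := by
  intro M hMR hMc hMfin
  obtain ⟨π, hπ⟩ := hR
  obtain ⟨N, hNM, -, hNfin, p, hp⟩ := h (M.comap R.subtype) (hMc.preimage continuous_subtype_val)
    fun h => hMfin (comapSubtypeEquivOfLe hMR).finiteDimensional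
  have hleft : (R.subtypeL ∘L N.subtypeL).HasLeftInverse :=
    ⟨p ∘L π, fun x => by simp [hπ, hp]⟩
  exact hleft.exists_le_closedComplemented hNfin fun x => hNM x.2

lemma exists_continuousLinearEquiv_range_of_norm_le (f : X →L[ℝ] Y) (C : ℝ)
    (hf : ∀ x, ‖x‖ ≤ C * ‖f x‖) :
    ∃ e : X ≃L[ℝ] LinearMap.range (f : X →ₗ[ℝ] Y), ∀ x, (e x : Y) = f x := by
  have hinj : Function.Injective f := fun x y hxy => by
    simpa [sub_eq_zero, hxy] using hf (x - y)
  let e := LinearEquiv.ofInjective (f : X →ₗ[ℝ] Y) hinj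
  refine ⟨e.toContinuousLinearEquivOfBounds ‖f‖ C f.le_opNorm fun y => ?_, fun x => rfl⟩
  have hy : f (e.symm y) = y := congrArg Subtype.val (e.apply_symm_apply y)
  simpa only [hy, Submodule.coe_norm] using hf (e.symm y)

theorem exists_le_closedComplemented_of_isBoundedBelowOn [CompleteSpace X] {T : X →L[ℝ] Y}
    {M : Submodule ℝ X} {W : Submodule ℝ Y} (hMc : IsClosed (M : Set X))
    (hMfin : ¬ FiniteDimensional ℝ M) (hT : IsBoundedBelowOn T M) (hTW : ∀ x ∈ M, T x ∈ W) (hW : SubprojectiveWrt W) :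
    ∃ N ≤ M, IsClosed (N : Set X) ∧ ¬ FiniteDimensional ℝ N ∧ N.ClosedComplemented := by
  obtain ⟨C, hC⟩ := hT
  have : CompleteSpace M := hMc.completeSpace_coe
  set g := T ∘L M.subtypeL
  have hg : AntilipschitzWith C g := g.antilipschitz_of_bound fun x => hC x x.2
  obtain ⟨e, he⟩ := exists_continuousLinearEquiv_range_of_norm_le g C fun x => hC x x.2
  obtain ⟨N, hNg, -, hNfin, p, hp⟩ := hW (LinearMap.range (g : M →ₗ[ℝ] Y))
    (by rintro _ ⟨x, rfl⟩; exact hTW x x.2)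
    (by simpa only [LinearMap.coe_range, ContinuousLinearMap.coe_coe]
      using hg.isClosed_range g.uniformContinuous)
    (fun h => hMfin e.symm.toLinearEquiv.finiteDimensional)
  have hleft : (M.subtypeL ∘L e.symm.toContinuousLinearMap ∘L
      N.subtypeL.codRestrict _ fun y => hNg y.2).HasLeftInverse := by
    have hTe : ∀ z, T (e.symm z : X) = z := fun z =>
      (he (e.symm z)).symm.trans (congrArg Subtype.val (e.apply_symm_apply z))
    exact ⟨p ∘L T, fun y => by simp [hTe, hp]⟩
  exact hleft.exists_le_closedComplemented hNfin fun y => (e.symm _).2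

lemma isBoundedBelowOn_one_sub {T : X →L[ℝ] X} {M : Submodule ℝ X}
    (hT : ∀ x ∈ M, ‖T x‖ ≤ 1 / 2 * ‖x‖) : IsBoundedBelowOn (1 - T) M :=
  ⟨2, fun x hx => by
    have htri := norm_le_norm_add_norm_sub' x (T x)
    simp only [sub_apply, one_apply_eq_self, NNReal.coe_ofNat]
    linarith [hT x hx]⟩

lemma exists_finiteCodim_forall_le_norm_add (F : Submodule ℝ X) [FiniteDimensional ℝ F]
    {θ : ℝ} (hθ : θ < 1) :
    ∃ K : Submodule ℝ X, IsClosed (K : Set X) ∧ FiniteDimensional ℝ (X ⧸ K) ∧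
      ∀ y ∈ F, ∀ z ∈ K, θ * ‖y‖ ≤ ‖y + z‖ := by
  choose φ hφ1 hφ using fun x : X => exists_dual_vector'' ℝ x
  obtain ⟨t, -, hcover⟩ := (isCompact_sphere (0 : F) 1).elim_nhds_subcover
    (fun u => {v : F | θ < φ u v}) fun u hu => by
      refine IsOpen.mem_nhds (isOpen_lt continuous_const ((φ u).continuous.comp
        continuous_subtype_val)) ?_
      simpa [hφ, Submodule.norm_coe, mem_sphere_zero_iff_norm.mp hu] using hθ
  let L : X →L[ℝ] (t → ℝ) := ContinuousLinearMap.pi fun u => φ u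
  refine ⟨LinearMap.ker (L : X →ₗ[ℝ] (t → ℝ)), L.isClosed_ker,
    (L : X →ₗ[ℝ] (t → ℝ)).quotKerEquivRange.symm.finiteDimensional, fun y hy z hz => ?_⟩
  rcases eq_or_ne y 0 with rfl | hy0
  · simp
  have hu : (‖y‖⁻¹ • ⟨y, hy⟩ : F) ∈ Metric.sphere (0 : F) 1 := by
    simp [norm_smul, hy0]
  obtain ⟨u, hut, hθu⟩ := Set.mem_iUnion₂.mp (hcover hu)
  have hz : φ u z = 0 := congrFun hz ⟨u, hut⟩
  have hθy : θ * ‖y‖ < φ u y := by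
    have : θ < ‖y‖⁻¹ * φ u y := by simpa using hθu
    rwa [lt_inv_mul_iff₀ (norm_pos_iff.mpr hy0), mul_comm] at this
  calc θ * ‖y‖ ≤ φ u y := hθy.le
    _ = φ u (y + z) := by rw [map_add, hz, add_zero]
    _ ≤ ‖φ u‖ * ‖y + z‖ := (le_abs_self _).trans ((φ u).le_opNorm _)
    _ ≤ ‖y + z‖ := mul_le_of_le_one_left (norm_nonneg _) (hφ1 _)

lemma exists_mem_norm_map_lt_forall_le_norm_add_smul {T : X →L[ℝ] Y} {M : Submodule ℝ X}
    (hMc : IsClosed (M : Set X)) (hMfin : ¬ FiniteDimensional ℝ M)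
    (hT : ∀ M' ≤ M, IsClosed (M' : Set X) → ¬ FiniteDimensional ℝ M' → ¬ IsBoundedBelowOn T M')
    (F : Submodule ℝ X) [FiniteDimensional ℝ F] {θ δ : ℝ} (hθ : θ < 1) (hδ : 0 < δ) :
    ∃ x ∈ M, ‖T x‖ < δ * ‖x‖ ∧ ∀ y ∈ F, ∀ l : ℝ, θ * ‖y‖ ≤ ‖y + l • x‖ := by
  obtain ⟨K, hKc, hKfin, hK⟩ := exists_finiteCodim_forall_le_norm_add F hθ
  have hnot := hT (M ⊓ K) inf_le_left (hMc.inter hKc) (not_finiteDimensional_inf hMfin)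
  simp only [IsBoundedBelowOn, not_exists, not_forall, not_le] at hnot
  obtain ⟨x, ⟨hxM, hxK⟩, hx⟩ := hnot (Real.toNNReal δ⁻¹)
  refine ⟨x, hxM, ?_, fun y hy l => hK y hy _ (K.smul_mem l hxK)⟩
  rwa [Real.coe_toNNReal _ (inv_nonneg.mpr hδ.le), inv_mul_lt_iff₀ hδ] at hx

def IsBasicSeqWith (c : ℕ → ℝ) (e : ℕ → X) : Prop :=
  ∀ n, ∀ y ∈ span ℝ (e '' range n), ∀ l : ℝ, c n * ‖y‖ ≤ c (n + 1) * ‖y + l • e n‖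

lemma sum_range_smul_mem_span_image (e : ℕ → X) (a : ℕ → ℝ) (n : ℕ) :
    ∑ k ∈ range n, a k • e k ∈ span ℝ (e '' range n) :=
  sum_mem fun k hk => smul_mem _ _ (subset_span ⟨k, hk, rfl⟩)

namespace IsBasicSeqWith

variable {c : ℕ → ℝ} {e : ℕ → X} {K : ℝ}

lemma monotone_mul_norm_sum_range (he : IsBasicSeqWith c e) (a : ℕ → ℝ) :
    Monotone fun n => c n * ‖∑ k ∈ range n, a k • e k‖ :=
  monotone_nat_of_le_succ fun n => by
    simpa only [sum_range_succ] using he n _ (sum_range_smul_mem_span_image e a n) (a n)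

lemma norm_sum_range_le (he : IsBasicSeqWith c e) (hc : ∀ n, 1 ≤ c n ∧ c n ≤ K)
    (a : ℕ → ℝ) {m n : ℕ} (hmn : m ≤ n) :
    ‖∑ k ∈ range m, a k • e k‖ ≤ K * ‖∑ k ∈ range n, a k • e k‖ :=
  calc ‖∑ k ∈ range m, a k • e k‖ ≤ c m * ‖∑ k ∈ range m, a k • e k‖ :=
        le_mul_of_one_le_left (norm_nonneg _) (hc m).1
    _ ≤ c n * ‖∑ k ∈ range n, a k • e k‖ := he.monotone_mul_norm_sum_range a hmn
    _ ≤ K * ‖∑ k ∈ range n, a k • e k‖ := mul_le_mul_of_nonneg_right (hc n).2 (norm_nonneg _)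

lemma norm_smul_le (he : IsBasicSeqWith c e) (hc : ∀ n, 1 ≤ c n ∧ c n ≤ K)
    (a : ℕ → ℝ) {k n : ℕ} (hkn : k < n) :
    ‖a k • e k‖ ≤ 2 * K * ‖∑ i ∈ range n, a i • e i‖ := by
  have hk : a k • e k = ∑ i ∈ range (k + 1), a i • e i - ∑ i ∈ range k, a i • e i := by
    rw [sum_range_succ, add_sub_cancel_left]
  rw [hk]
  linarith [norm_sub_le (∑ i ∈ range (k + 1), a i • e i) (∑ i ∈ range k, a i • e i),
    he.norm_sum_range_le hc a hkn, he.norm_sum_range_le hc a hkn.le]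

lemma norm_map_sum_range_le (he : IsBasicSeqWith c e) (hc : ∀ n, 1 ≤ c n ∧ c n ≤ K)
    (T : X →L[ℝ] Y) {δ : ℕ → ℝ} (hTe : ∀ k, ‖T (e k)‖ ≤ δ k * ‖e k‖) (hδ : ∀ k, 0 ≤ δ k)
    (a : ℕ → ℝ) (n : ℕ) :
    ‖T (∑ k ∈ range n, a k • e k)‖ ≤ 2 * K * (∑ k ∈ range n, δ k) * ‖∑ k ∈ range n, a k • e k‖ :=
  calc ‖T (∑ k ∈ range n, a k • e k)‖ ≤ ∑ k ∈ range n, ‖T (a k • e k)‖ := by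
        rw [map_sum]
        exact norm_sum_le _ _
    _ ≤ ∑ k ∈ range n, δ k * (2 * K * ‖∑ i ∈ range n, a i • e i‖) := by
        refine sum_le_sum fun k hk => ?_
        calc ‖T (a k • e k)‖ = ‖a k‖ * ‖T (e k)‖ := by rw [map_smul, norm_smul]
          _ ≤ ‖a k‖ * (δ k * ‖e k‖) := by gcongr; exact hTe k
          _ = δ k * ‖a k • e k‖ := by rw [norm_smul]; ring
          _ ≤ δ k * (2 * K * ‖∑ i ∈ range n, a i • e i‖) := by
            gcongr
            · exact hδ k
            · exact he.norm_smul_le hc a (mem_range.mp hk)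
    _ = 2 * K * (∑ k ∈ range n, δ k) * ‖∑ k ∈ range n, a k • e k‖ := by
        rw [← sum_mul]
        ring

end IsBasicSeqWith

lemma linearIndependent_of_norm_smul_le {e : ℕ → X} (he0 : ∀ k, e k ≠ 0) {C : ℝ}
    (h : ∀ (a : ℕ → ℝ) n k, k < n → ‖a k • e k‖ ≤ C * ‖∑ i ∈ range n, a i • e i‖) :
    LinearIndependent ℝ e := by
  refine linearIndependent_iff.2 fun l hl => Finsupp.ext fun k => ?_
  obtain ⟨n, hn, hsum⟩ := Finsupp.exists_linearCombination_eq_sum_range e l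
  by_cases hk : k < n
  · have hlk := h l n k hk
    rw [← hsum, hl, norm_zero, mul_zero, norm_le_zero_iff] at hlk
    exact (smul_eq_zero.mp hlk).resolve_right (he0 k)
  · exact Finsupp.notMem_support_iff.mp fun hks => hk (mem_range.mp (hn hks))

lemma norm_map_le_of_mem_topologicalClosure_span {T : X →L[ℝ] Y} {e : ℕ → X} {ε : ℝ}
    (h : ∀ (a : ℕ → ℝ) n, ‖T (∑ k ∈ range n, a k • e k)‖ ≤ ε * ‖∑ k ∈ range n, a k • e k‖) :
    ∀ x ∈ (span ℝ (Set.range e)).topologicalClosure, ‖T x‖ ≤ ε * ‖x‖ := by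
  have hspan : (span ℝ (Set.range e) : Set X) ⊆ {x | ‖T x‖ ≤ ε * ‖x‖} := by
    intro x hx
    rw [SetLike.mem_coe, ← Finsupp.range_linearCombination] at hx
    obtain ⟨l, rfl⟩ := hx
    obtain ⟨n, -, hsum⟩ := Finsupp.exists_linearCombination_eq_sum_range e l
    change ‖T _‖ ≤ ε * ‖_‖
    rw [hsum]
    exact h l n
  intro x hx
  rw [← SetLike.mem_coe, topologicalClosure_coe] at hx
  exact closure_minimal hspan (isClosed_le (by fun_prop) (by fun_prop)) hx

theorem exists_le_forall_norm_map_le_of_forall_not_isBoundedBelowOn {T : X →L[ℝ] Y}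
    {M : Submodule ℝ X} (hMc : IsClosed (M : Set X)) (hMfin : ¬ FiniteDimensional ℝ M)
    (hT : ∀ M' ≤ M, IsClosed (M' : Set X) → ¬ FiniteDimensional ℝ M' → ¬ IsBoundedBelowOn T M')
    {ε : ℝ} (hε : 0 < ε) :
    ∃ M' ≤ M, IsClosed (M' : Set X) ∧ ¬ FiniteDimensional ℝ M' ∧
      ∀ x ∈ M', ‖T x‖ ≤ ε * ‖x‖ := by
  -- `c` increases from `1` to `2`, so the coefficients of `∑ k < n, a k • e k` are at most
  -- `4 ‖∑ k < n, a k • e k‖`, while the `δ k` sum to at most `ε / 4`.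
  set c : ℕ → ℝ := fun n => 2 - (1 / 2) ^ n
  have hc : ∀ n, 1 ≤ c n ∧ c n ≤ 2 := fun n =>
    ⟨by linarith [pow_le_one₀ (n := n) (by norm_num : (0 : ℝ) ≤ 1 / 2) (by norm_num)],
      by linarith [pow_nonneg (by norm_num : (0 : ℝ) ≤ 1 / 2) n]⟩
  have hcpos : ∀ n, 0 < c n := fun n => one_pos.trans_le (hc n).1
  have hθ : ∀ n, c n / c (n + 1) < 1 := fun n => by
    rw [div_lt_one (hcpos _)]
    simp only [c, pow_succ]
    linarith [pow_pos (by norm_num : (0 : ℝ) < 1 / 2) n]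
  set δ : ℕ → ℝ := fun n => ε / 8 * (1 / 2) ^ n
  obtain ⟨e, he⟩ := exists_seq_forall_span_image_range
    (fun n F x => x ∈ M ∧ ‖T x‖ < δ n * ‖x‖ ∧ ∀ y ∈ F, ∀ l : ℝ, c n / c (n + 1) * ‖y‖ ≤ ‖y + l • x‖)
    fun n F _ => exists_mem_norm_map_lt_forall_le_norm_add_smul hMc hMfin hT F (hθ n)
      (by positivity)
  have hbasic : IsBasicSeqWith c e := fun n y hy l => by
    have := (he n).2.2 y hy l
    rwa [div_mul_eq_mul_div, div_le_iff₀ (hcpos _), mul_comm ‖_ + _‖] at this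
  have hsmall : ∀ (a : ℕ → ℝ) n,
      ‖T (∑ k ∈ range n, a k • e k)‖ ≤ ε * ‖∑ k ∈ range n, a k • e k‖ := fun a n => by
    refine (hbasic.norm_map_sum_range_le hc T (fun k => (he k).2.1.le) (fun k => by positivity)
      a n).trans (mul_le_mul_of_nonneg_right ?_ (norm_nonneg _))
    simp only [δ, ← mul_sum]
    nlinarith [sum_geometric_two_le n]
  have hli : LinearIndependent ℝ e := linearIndependent_of_norm_smul_le
    (fun k hk => by simpa [hk] using (he k).2.1) fun a n k => hbasic.norm_smul_le hc a
  refine ⟨(span ℝ (Set.range e)).topologicalClosure,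
    topologicalClosure_minimal _ (span_le.2 (Set.range_subset_iff.2 fun k => (he k).1)) hMc,
    isClosed_topologicalClosure _,
    hli.not_finiteDimensional_of_forall_mem fun k => le_topologicalClosure _ (subset_span ⟨k, rfl⟩),
    norm_map_le_of_mem_topologicalClosure_span hsmall⟩

end

theorem subprojectiveWrt_of_projection_general
    (X : Type*) [NormedAddCommGroup X] [NormedSpace ℝ X] [CompleteSpace X]
    (P : X →L[ℝ] X) (hP : ∀ x, P (P x) = P x)
    (hrange : Subprojective ↥(LinearMap.range (P : X →ₗ[ℝ] X)))
    (Z : Submodule ℝ X)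
    (hPZ : ∀ x ∈ Z, P x ∈ Z)
    (hker : SubprojectiveWrt (Z ⊓ LinearMap.ker (P : X →ₗ[ℝ] X))) :
    SubprojectiveWrt Z := by
  intro M hMZ hMc hMfin
  by_cases hbdd : ∃ M' ≤ M, IsClosed (M' : Set X) ∧ ¬ FiniteDimensional ℝ M' ∧ IsBoundedBelowOn P M'
  · obtain ⟨M', hM'M, hM'c, hM'fin, hPM'⟩ := hbdd
    have hrangeWrt : SubprojectiveWrt (LinearMap.range (P : X →ₗ[ℝ] X)) :=
      (ContinuousLinearMap.IsIdempotentElem.isTopCompl (ContinuousLinearMap.ext hP)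
        ).closedComplemented.subprojectiveWrt hrange
    obtain ⟨N, hNM', hN⟩ := exists_le_closedComplemented_of_isBoundedBelowOn hM'c hM'fin hPM'
      (fun x _ => LinearMap.mem_range_self _ x) hrangeWrt
    exact ⟨N, hNM'.trans hM'M, hN⟩
  · push Not at hbdd
    obtain ⟨M', hM'M, hM'c, hM'fin, hPM'⟩ :=
      exists_le_forall_norm_map_le_of_forall_not_isBoundedBelowOn hMc hMfin hbdd one_half_pos
    have hmaps : ∀ x ∈ M', (1 - P) x ∈ Z ⊓ LinearMap.ker (P : X →ₗ[ℝ] X) := fun x hx =>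
      ⟨Z.sub_mem (hMZ (hM'M hx)) (hPZ x (hMZ (hM'M hx))), by simp [hP]⟩
    obtain ⟨N, hNM', hN⟩ := exists_le_closedComplemented_of_isBoundedBelowOn hM'c hM'fin
      (isBoundedBelowOn_one_sub hPM') hmaps hker
    exact ⟨N, hNM'.trans hM'M, hN⟩

theorem subprojectiveWrt_of_projection
    (X : Type*) [NormedAddCommGroup X] [NormedSpace ℝ X] [CompleteSpace X]
    (P : X →L[ℝ] X) (hP : ∀ x, P (P x) = P x)
    (hrange : Subprojective ↥(LinearMap.range (P : X →ₗ[ℝ] X)))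
    (Z : Submodule ℝ X) (hZclosed : IsClosed (Z : Set X))
    (hPZ : ∀ x ∈ Z, P x ∈ Z)
    (hker : SubprojectiveWrt (Z ⊓ LinearMap.ker (P : X →ₗ[ℝ] X))) :
    SubprojectiveWrt Z :=
  subprojectiveWrt_of_projection_general X P hP hrange Z hPZ hker
end

section
/- Let K be a compact Hausdorff space, let X be a real Banach space, and let M be a closed separable subspace of C(K,X). Then there exist a separable closed linear subspace G of C(K,ℝ) and a separable closed linear subspace Z of X such that M is contained in the closed linear span in C(K,X) of the set of functions { k ↦ g(k) • x : g ∈ G, x ∈ Z }. -/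
/-!
Take a countable dense subset `c` of `M`. On the compact space `K`, each `d ∈ c` is within `ε` of
`∑ i ∈ t, gᵢ • d i`, where `(gᵢ)` is the partition of unity obtained by normalising the tents
`k ↦ max 0 (ε - dist (d k) (d i))` over a finite `ε`-net `(d i)` of the range of `d`. Letting
`ε = 1/(n+1)` gives countably many `gᵢ`, whose closed span is `G`; the values `d i` lie in the
separable set `⋃ d ∈ c, range d`, whose closed span is `Z`.
-/

open TopologicalSpace Set Submodule

theorem dist_sum_smul_le {ι E : Type*} [SeminormedAddCommGroup E] [NormedSpace ℝ E]
    {t : Finset ι} {w : ι → ℝ} {x : ι → E} {y : E} {ε : ℝ}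
    (hw₀ : ∀ i ∈ t, 0 ≤ w i) (hw₁ : ∑ i ∈ t, w i = 1)
    (hx : ∀ i ∈ t, w i ≠ 0 → dist (x i) y ≤ ε) :
    dist (∑ i ∈ t, w i • x i) y ≤ ε := by
  have hsum : ∑ i ∈ t with w i ≠ 0, w i • x i = ∑ i ∈ t, w i • x i :=
    Finset.sum_filter_of_ne fun i _ h => left_ne_zero_of_smul h
  have hw₁' : ∑ i ∈ t with w i ≠ 0, w i = 1 := (Finset.sum_filter_ne_zero _).trans hw₁
  rw [← hsum, ← Metric.mem_closedBall]
  refine (convex_closedBall y ε).sum_mem (fun i hi => hw₀ i (Finset.mem_filter.1 hi).1) hw₁' ?_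
  intro i hi
  rw [Finset.mem_filter] at hi
  exact hx i hi.1 hi.2

theorem exists_finset_forall_exists_dist_lt {K α : Type*} [TopologicalSpace K] [CompactSpace K]
    [PseudoMetricSpace α] {f : K → α} (hf : Continuous f) {ε : ℝ} (hε : 0 < ε) :
    ∃ t : Finset K, ∀ k, ∃ i ∈ t, dist (f k) (f i) < ε := by
  obtain ⟨t, ht⟩ := isCompact_univ.elim_finite_subcover (fun i => {k | dist (f k) (f i) < ε})
    (fun i => isOpen_lt (by fun_prop) continuous_const)
    (fun k _ => mem_iUnion.2 ⟨k, by simpa using hε⟩)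
  exact ⟨t, fun k => by simpa using ht (mem_univ k)⟩

namespace ContinuousMap

variable {K X : Type*} [TopologicalSpace K] [NormedAddCommGroup X] [NormedSpace ℝ X]

def elementaryTensors (G : Set C(K, ℝ)) (Z : Set X) : Set C(K, X) :=
  {f | ∃ g ∈ G, ∃ x ∈ Z, ∀ k, f k = g k • x}

theorem elementaryTensors_mono {G G' : Set C(K, ℝ)} {Z Z' : Set X} (hG : G ⊆ G') (hZ : Z ⊆ Z') :
    elementaryTensors G Z ⊆ elementaryTensors G' Z' :=
  fun _ ⟨g, hg, x, hx, hf⟩ => ⟨g, hG hg, x, hZ hx, hf⟩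

theorem smul_const_mem_elementaryTensors {G : Set C(K, ℝ)} {Z : Set X} {g : C(K, ℝ)} {x : X}
    (hg : g ∈ G) (hx : x ∈ Z) : g • const K x ∈ elementaryTensors G Z :=
  ⟨g, hg, x, hx, fun _ => rfl⟩

variable [CompactSpace K]

theorem exists_finset_dist_sum_smul_const_le (f : C(K, X)) {ε : ℝ} (hε : 0 < ε) :
    ∃ (t : Finset K) (g : K → C(K, ℝ)), dist (∑ i ∈ t, g i • const K (f i)) f ≤ ε := by
  obtain ⟨t, ht⟩ := exists_finset_forall_exists_dist_lt f.continuous hε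
  let tent : K → C(K, ℝ) := fun i => ⟨fun k => max 0 (ε - dist (f k) (f i)), by fun_prop⟩
  have tent_nonneg : ∀ i k, 0 ≤ tent i k := fun i k => le_max_left _ _
  let s : C(K, ℝ) := ∑ i ∈ t, tent i
  have s_pos : ∀ k, 0 < s k := by
    intro k
    obtain ⟨i, hi, hk⟩ := ht k
    simp only [s, coe_sum, Finset.sum_apply]
    exact Finset.sum_pos' (fun j _ => tent_nonneg j k) ⟨i, hi, lt_max_of_lt_right (by linarith)⟩
  let g : K → C(K, ℝ) := fun i => ⟨fun k => tent i k / s k,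
    (tent i).continuous.div s.continuous fun k => (s_pos k).ne'⟩
  refine ⟨t, g, (dist_le hε.le).2 fun k => ?_⟩
  simp only [coe_sum, Finset.sum_apply, smul_apply', const_apply]
  refine dist_sum_smul_le (fun i _ => div_nonneg (tent_nonneg i k) (s_pos k).le) ?_ ?_
  · simp only [g, coe_mk, ← Finset.sum_div]
    simpa [s] using div_self (s_pos k).ne'
  · intro i _ hi
    have htent : tent i k ≠ 0 := fun h => hi (by simp [g, h])
    rw [dist_comm]
    by_contra! h
    exact htent (max_eq_left (by linarith))

theorem exists_countable_mem_closure_span_elementaryTensors (f : C(K, X)) :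
    ∃ G : Set C(K, ℝ), G.Countable ∧
      f ∈ closure (span ℝ (elementaryTensors G (range f)) : Set C(K, X)) := by
  choose t g hg using fun n : ℕ =>
    exists_finset_dist_sum_smul_const_le f (Nat.one_div_pos_of_nat (n := n))
  refine ⟨⋃ n, g n '' t n, countable_iUnion fun n => (t n).countable_toSet.image _, ?_⟩
  refine Metric.mem_closure_iff.2 fun ε hε => ?_
  obtain ⟨n, hn⟩ := exists_nat_one_div_lt hε
  refine ⟨_, sum_mem fun i hi => subset_span ?_, (dist_comm _ _).trans_le (hg n) |>.trans_lt hn⟩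
  exact smul_const_mem_elementaryTensors (mem_iUnion.2 ⟨n, mem_image_of_mem _ hi⟩)
    (mem_range_self i)

end ContinuousMap

theorem Submodule.isSeparable_topologicalClosure_span {E : Type*} [SeminormedAddCommGroup E]
    [NormedSpace ℝ E] {s : Set E} (hs : IsSeparable s) :
    IsSeparable ((span ℝ s).topologicalClosure : Set E) := by
  rw [topologicalClosure_coe]
  exact hs.span.closure

open ContinuousMap in
theorem exists_separable_subspaces_of_separable_subspace_general
    (K : Type*) [TopologicalSpace K] [CompactSpace K]
    (X : Type*) [NormedAddCommGroup X] [NormedSpace ℝ X]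
    (M : Submodule ℝ C(K, X))
    (hMsep : TopologicalSpace.IsSeparable (M : Set C(K, X))) :
    ∃ G : Submodule ℝ C(K, ℝ), ∃ Z : Submodule ℝ X,
      IsClosed (G : Set C(K, ℝ)) ∧ TopologicalSpace.IsSeparable (G : Set C(K, ℝ)) ∧
      IsClosed (Z : Set X) ∧ TopologicalSpace.IsSeparable (Z : Set X) ∧
      M ≤ (Submodule.span ℝ
        { f : C(K, X) | ∃ g ∈ G, ∃ x ∈ Z, ∀ k : K, f k = g k • x }).topologicalClosure := by
  obtain ⟨c, hc, hMc⟩ := hMsep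
  have := hc.to_subtype
  choose G₀ hG₀ hmem using exists_countable_mem_closure_span_elementaryTensors (K := K) (X := X)
  let G := (span ℝ (⋃ d : c, G₀ d)).topologicalClosure
  let Z := (span ℝ (⋃ d : c, range d.1)).topologicalClosure
  have hG : ∀ d : c, G₀ d ⊆ G := fun d =>
    (subset_iUnion (fun d : c => G₀ d) d).trans (subset_span.trans (le_topologicalClosure _))
  have hZ : ∀ d : c, range d.1 ⊆ Z := fun d =>
    (subset_iUnion (fun d : c => range d.1) d).trans (subset_span.trans (le_topologicalClosure _))
  have hc_closure : c ⊆ closure (span ℝ (elementaryTensors (G : Set C(K, ℝ)) (Z : Set X))) :=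
    fun d hd => closure_mono (SetLike.coe_mono (span_mono
      (elementaryTensors_mono (hG ⟨d, hd⟩) (hZ ⟨d, hd⟩)))) (hmem d)
  refine ⟨G, Z, isClosed_topologicalClosure _,
    isSeparable_topologicalClosure_span (countable_iUnion fun d : c => hG₀ d).isSeparable,
    isClosed_topologicalClosure _,
    isSeparable_topologicalClosure_span
      (.iUnion fun d => (isCompact_range d.1.continuous).isSeparable),
    fun m hm => ?_⟩
  rw [← SetLike.mem_coe, topologicalClosure_coe]
  exact closure_minimal hc_closure isClosed_closure (hMc hm)

theorem exists_separable_subspaces_of_separable_subspace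
    (K : Type*) [TopologicalSpace K] [CompactSpace K] [T2Space K]
    (X : Type*) [NormedAddCommGroup X] [NormedSpace ℝ X]
    (M : Submodule ℝ C(K, X)) (hMclosed : IsClosed (M : Set C(K, X)))
    (hMsep : TopologicalSpace.IsSeparable (M : Set C(K, X))) :
    ∃ G : Submodule ℝ C(K, ℝ), ∃ Z : Submodule ℝ X,
      IsClosed (G : Set C(K, ℝ)) ∧ TopologicalSpace.IsSeparable (G : Set C(K, ℝ)) ∧
      IsClosed (Z : Set X) ∧ TopologicalSpace.IsSeparable (Z : Set X) ∧
      M ≤ (Submodule.span ℝ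
        { f : C(K, X) | ∃ g ∈ G, ∃ x ∈ Z, ∀ k : K, f k = g k • x }).topologicalClosure :=
  exists_separable_subspaces_of_separable_subspace_general K X M hMsep
end

section
/- Let K be a compact Hausdorff space, let X be a real Banach space, let (V_n)_{n∈ℕ} be a sequence of pairwise disjoint clopen subsets of K, and let (f_n)_{n∈ℕ} be a sequence in C(K,X) such that for each n: ‖f_n‖ = 1, f_n vanishes outside V_n, and there is a point t_n ∈ V_n with ‖f_n(t_n)‖ = 1. Assume moreover that the sequence (t_n) converges to a point t_∞ ∈ K with t_∞ ∉ ⋃_{n∈ℕ} V_n. Then the map J : c₀ → C(K,X) defined by J((α_n)_{n∈ℕ}) = Σ_{n=1}^∞ α_n f_n is a well-defined linear isometric embedding of c₀ into C(K,X), and its range, the closed linear span of { f_n : n ∈ ℕ }, is complemented in C(K,X) (it is the range of a continuous linear projection on C(K,X)). -/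
/-!
Since the `V n` are disjoint, at every point at most one term of `∑ αₙ • fₙ` is nonzero, so the
partial sums are bounded by `sup |αₙ|` and the series converges; evaluating at `tₙ` gives back
`|αₙ|`, so `J` is an isometry. If `φₙ` is a norming functional of `fₙ(tₙ)`, then
`g ↦ (φₙ (g tₙ - g t∞))ₙ` maps `C(K, X)` into `c₀` because `tₙ → t∞`, and it is a left inverse of
`J` because every `fₙ` vanishes at `t∞`. The range of an operator with a continuous left inverse
is complemented.
-/

open Filter Topology
open ZeroAtInfty

namespace ZeroAtInftyContinuousMap

section Sequences

variable {β : Type*} [TopologicalSpace β] [Zero β]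

def ofTendsto (a : ℕ → β) (ha : Tendsto a atTop (𝓝 0)) : C₀(ℕ, β) :=
  ⟨⟨a, continuous_of_discreteTopology⟩, cocompact_eq_atTop (α := ℕ) ▸ ha⟩

@[simp]
theorem coe_ofTendsto (a : ℕ → β) (ha : Tendsto a atTop (𝓝 0)) : ⇑(ofTendsto a ha) = a :=
  rfl

theorem tendsto_atTop_zero (α : C₀(ℕ, β)) : Tendsto α atTop (𝓝 0) :=
  cocompact_eq_atTop (α := ℕ) ▸ zero_at_infty α

def single (m : ℕ) (b : β) : C₀(ℕ, β) :=
  ofTendsto (Pi.single m b) <| tendsto_const_nhds.congr' <| by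
    filter_upwards [eventually_gt_atTop m] with n hn
    simp [hn.ne']

@[simp]
theorem coe_single (m : ℕ) (b : β) : ⇑(single m b) = Pi.single m b :=
  rfl

end Sequences

section Norm

variable {γ β : Type*} [TopologicalSpace γ] [SeminormedAddCommGroup β]

theorem norm_apply_le (α : C₀(γ, β)) (x : γ) : ‖α x‖ ≤ ‖α‖ :=
  norm_toBCF_eq_norm (f := α) ▸ α.toBCF.norm_coe_le_norm x

theorem norm_le {α : C₀(γ, β)} {C : ℝ} (hC : 0 ≤ C) : ‖α‖ ≤ C ↔ ∀ x, ‖α x‖ ≤ C :=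
  norm_toBCF_eq_norm (f := α) ▸ BoundedContinuousFunction.norm_le hC

end Norm

end ZeroAtInftyContinuousMap

open ZeroAtInftyContinuousMap

theorem apply_eq_zero_of_mem_of_disjoint {K X : Type*} [Zero X] {V : ℕ → Set K} {f : ℕ → K → X}
    (hV : Pairwise (Function.onFun Disjoint V)) (hsupp : ∀ n, ∀ k ∉ V n, f n k = 0)
    {m n : ℕ} {k : K} (hk : k ∈ V m) (hmn : m ≠ n) : f n k = 0 :=
  hsupp n k fun hkn => (hV hmn).ne_of_mem hk hkn rfl

section DisjointSupports

variable {K X : Type*} [TopologicalSpace K] [NormedAddCommGroup X] [NormedSpace ℝ X]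
  {V : ℕ → Set K} {f : ℕ → C(K, X)}

theorem HasSum.apply_eq_of_mem {a : ℕ → ℝ} {g : C(K, X)} (hg : HasSum (fun n => a n • f n) g)
    (hV : Pairwise (Function.onFun Disjoint V)) (hsupp : ∀ n, ∀ k ∉ V n, f n k = 0) {m : ℕ}
    {k : K} (hk : k ∈ V m) : g k = a m • f m k :=
  (hg.mapL (ContinuousMap.evalCLM ℝ k)).unique <| hasSum_single m fun n hnm => by
    simp [apply_eq_zero_of_mem_of_disjoint hV hsupp hk (Ne.symm hnm)]

theorem HasSum.apply_eq_zero_of_notMem {a : ℕ → ℝ} {g : C(K, X)}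
    (hg : HasSum (fun n => a n • f n) g) (hsupp : ∀ n, ∀ k ∉ V n, f n k = 0) {k : K}
    (hk : k ∉ ⋃ n, V n) : g k = 0 :=
  (hg.mapL (ContinuousMap.evalCLM ℝ k)).unique <| hasSum_zero.congr_fun fun n => by
    simp [hsupp n k fun hkn => hk (Set.mem_iUnion_of_mem n hkn)]

variable [CompactSpace K]

theorem norm_sum_smul_le_of_disjoint (hV : Pairwise (Function.onFun Disjoint V))
    (hsupp : ∀ n, ∀ k ∉ V n, f n k = 0) (hf : ∀ n, ‖f n‖ ≤ 1) (a : ℕ → ℝ) (s : Finset ℕ)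
    {C : ℝ} (hC : 0 ≤ C) (ha : ∀ n ∈ s, ‖a n‖ ≤ C) : ‖∑ n ∈ s, a n • f n‖ ≤ C := by
  refine (ContinuousMap.norm_le _ hC).2 fun k => ?_
  simp only [ContinuousMap.sum_apply, ContinuousMap.smul_apply]
  by_cases hk : ∃ m ∈ s, k ∈ V m
  · obtain ⟨m, hm, hkm⟩ := hk
    rw [Finset.sum_eq_single_of_mem m hm fun n _ hnm => by
      rw [apply_eq_zero_of_mem_of_disjoint hV hsupp hkm hnm.symm, smul_zero]]
    calc ‖a m • f m k‖ = ‖a m‖ * ‖f m k‖ := norm_smul _ _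
      _ ≤ C * 1 := mul_le_mul (ha m hm) (((f m).norm_coe_le_norm k).trans (hf m))
          (norm_nonneg _) hC
      _ = C := mul_one C
  · push Not at hk
    rw [Finset.sum_eq_zero fun n hn => by rw [hsupp n k (hk n hn), smul_zero], norm_zero]
    exact hC

theorem summable_smul_of_disjoint [CompleteSpace X] (hV : Pairwise (Function.onFun Disjoint V))
    (hsupp : ∀ n, ∀ k ∉ V n, f n k = 0) (hf : ∀ n, ‖f n‖ ≤ 1) {a : ℕ → ℝ}
    (ha : Tendsto a atTop (𝓝 0)) : Summable fun n => a n • f n := by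
  refine summable_iff_vanishing_norm.2 fun ε hε => ?_
  obtain ⟨N, hN⟩ := eventually_atTop.1 <|
    (tendsto_zero_iff_norm_tendsto_zero.1 ha).eventually (gt_mem_nhds (half_pos hε))
  refine ⟨Finset.range N, fun s hs => ?_⟩
  refine (norm_sum_smul_le_of_disjoint hV hsupp hf a s (half_pos hε).le fun n hn => ?_).trans_lt
    (half_lt_self hε)
  exact (hN n <| not_lt.1 fun hnN => Finset.disjoint_left.1 hs hn (Finset.mem_range.2 hnN)).le

theorem norm_le_of_hasSum_smul_of_disjoint (hV : Pairwise (Function.onFun Disjoint V))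
    (hsupp : ∀ n, ∀ k ∉ V n, f n k = 0) (hf : ∀ n, ‖f n‖ ≤ 1) {a : ℕ → ℝ} {g : C(K, X)}
    (hg : HasSum (fun n => a n • f n) g) {C : ℝ} (ha : ∀ n, ‖a n‖ ≤ C) : ‖g‖ ≤ C :=
  le_of_tendsto' hg.norm fun s => norm_sum_smul_le_of_disjoint hV hsupp hf a s
    ((norm_nonneg _).trans (ha 0)) fun n _ => ha n

noncomputable def c0SumCLM [CompleteSpace X] (hV : Pairwise (Function.onFun Disjoint V))
    (hsupp : ∀ n, ∀ k ∉ V n, f n k = 0) (hf : ∀ n, ‖f n‖ ≤ 1) : C₀(ℕ, ℝ) →L[ℝ] C(K, X) :=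
  have summable (α : C₀(ℕ, ℝ)) : Summable fun n => α n • f n :=
    summable_smul_of_disjoint hV hsupp hf α.tendsto_atTop_zero
  LinearMap.mkContinuous
    { toFun := fun α => ∑' n, α n • f n
      map_add' := fun α β => by
        simp only [coe_add, Pi.add_apply, add_smul]
        exact (summable α).tsum_add (summable β)
      map_smul' := fun c α => by
        simp only [coe_smul, Pi.smul_apply, smul_eq_mul, mul_smul, RingHom.id_apply]
        exact (summable α).tsum_const_smul c }
    1 fun α => by
      simpa using norm_le_of_hasSum_smul_of_disjoint hV hsupp hf (summable α).hasSum
        (norm_apply_le α)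

variable [CompleteSpace X] (hV : Pairwise (Function.onFun Disjoint V))
  (hsupp : ∀ n, ∀ k ∉ V n, f n k = 0) (hf : ∀ n, ‖f n‖ ≤ 1)

theorem hasSum_c0SumCLM (α : C₀(ℕ, ℝ)) : HasSum (fun n => α n • f n) (c0SumCLM hV hsupp hf α) :=
  (summable_smul_of_disjoint hV hsupp hf α.tendsto_atTop_zero).hasSum

theorem c0SumCLM_single (m : ℕ) : c0SumCLM hV hsupp hf (single m 1) = f m :=
  (hasSum_c0SumCLM hV hsupp hf _).unique <| by
    simpa using hasSum_single (f := fun n => (Pi.single m 1 : ℕ → ℝ) n • f n) m fun n hnm => by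
      simp [hnm]

theorem isometry_c0SumCLM {t : ℕ → K} (ht : ∀ n, t n ∈ V n) (hft : ∀ n, ‖f n (t n)‖ = 1) :
    Isometry (c0SumCLM hV hsupp hf) := by
  refine AddMonoidHomClass.isometry_of_norm _ fun α => le_antisymm
    (norm_le_of_hasSum_smul_of_disjoint hV hsupp hf (hasSum_c0SumCLM hV hsupp hf α)
      (norm_apply_le α)) ((norm_le (norm_nonneg _)).2 fun n => ?_)
  calc ‖α n‖ = ‖α n • f n (t n)‖ := by rw [norm_smul, hft n, mul_one]
    _ = ‖c0SumCLM hV hsupp hf α (t n)‖ := by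
      rw [(hasSum_c0SumCLM hV hsupp hf α).apply_eq_of_mem hV hsupp (ht n)]
    _ ≤ ‖c0SumCLM hV hsupp hf α‖ := ContinuousMap.norm_coe_le_norm _ _

theorem range_c0SumCLM {t : ℕ → K} (ht : ∀ n, t n ∈ V n) (hft : ∀ n, ‖f n (t n)‖ = 1) :
    LinearMap.range (c0SumCLM hV hsupp hf : C₀(ℕ, ℝ) →ₗ[ℝ] C(K, X)) =
      (Submodule.span ℝ (Set.range f)).topologicalClosure := by
  refine le_antisymm ?_ <| Submodule.topologicalClosure_minimal _ ?_
    (isometry_c0SumCLM hV hsupp hf ht hft).isClosedEmbedding.isClosed_range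
  · rintro - ⟨α, rfl⟩
    refine mem_closure_of_tendsto (hasSum_c0SumCLM hV hsupp hf α) (Eventually.of_forall fun s => ?_)
    exact Submodule.sum_mem _ fun n _ => Submodule.smul_mem _ _ (Submodule.subset_span ⟨n, rfl⟩)
  · rw [Submodule.span_le]
    rintro - ⟨m, rfl⟩
    exact ⟨single m 1, c0SumCLM_single hV hsupp hf m⟩

end DisjointSupports

section Coordinates

variable {K X : Type*} [TopologicalSpace K] [CompactSpace K] [NormedAddCommGroup X]
  [NormedSpace ℝ X]

noncomputable def c0CoordCLM (φ : ℕ → StrongDual ℝ X) (hφ : ∀ n, ‖φ n‖ ≤ 1) {t : ℕ → K}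
    {tinf : K} (htend : Tendsto t atTop (𝓝 tinf)) : C(K, X) →L[ℝ] C₀(ℕ, ℝ) :=
  have le_norm_sub (g : C(K, X)) (n : ℕ) : ‖φ n (g (t n) - g tinf)‖ ≤ ‖g (t n) - g tinf‖ :=
    ((φ n).le_opNorm _).trans (mul_le_of_le_one_left (norm_nonneg _) (hφ n))
  LinearMap.mkContinuous
    { toFun := fun g => ofTendsto (fun n => φ n (g (t n) - g tinf)) <| by
        refine squeeze_zero_norm (le_norm_sub g) ?_
        simpa using (((g.continuous.tendsto tinf).comp htend).sub_const (g tinf)).norm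
      map_add' := fun g h => by
        ext n
        simp only [coe_ofTendsto, coe_add, Pi.add_apply, ContinuousMap.add_apply, ← map_add]
        congr 1
        abel
      map_smul' := fun c g => by
        ext n
        simp [mul_sub] }
    2 fun g => (norm_le (by positivity)).2 fun n => calc
      _ ≤ ‖g (t n) - g tinf‖ := le_norm_sub g n
      _ ≤ ‖g (t n)‖ + ‖g tinf‖ := norm_sub_le _ _
      _ ≤ 2 * ‖g‖ := by linarith [g.norm_coe_le_norm (t n), g.norm_coe_le_norm tinf]

@[simp]
theorem c0CoordCLM_apply (φ : ℕ → StrongDual ℝ X) (hφ : ∀ n, ‖φ n‖ ≤ 1) {t : ℕ → K} {tinf : K}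
    (htend : Tendsto t atTop (𝓝 tinf)) (g : C(K, X)) (n : ℕ) :
    c0CoordCLM φ hφ htend g n = φ n (g (t n) - g tinf) :=
  rfl

theorem c0CoordCLM_c0SumCLM [CompleteSpace X] {V : ℕ → Set K} {f : ℕ → C(K, X)}
    (hV : Pairwise (Function.onFun Disjoint V)) (hsupp : ∀ n, ∀ k ∉ V n, f n k = 0)
    (hf : ∀ n, ‖f n‖ ≤ 1) {φ : ℕ → StrongDual ℝ X} (hφ : ∀ n, ‖φ n‖ ≤ 1) {t : ℕ → K}
    {tinf : K} (htend : Tendsto t atTop (𝓝 tinf)) (ht : ∀ n, t n ∈ V n)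
    (hφf : ∀ n, φ n (f n (t n)) = 1) (htinf : tinf ∉ ⋃ n, V n) :
    Function.LeftInverse (c0CoordCLM φ hφ htend) (c0SumCLM hV hsupp hf) := fun α => by
  have hα := hasSum_c0SumCLM hV hsupp hf α
  ext n
  rw [c0CoordCLM_apply, hα.apply_eq_of_mem hV hsupp (ht n),
    hα.apply_eq_zero_of_notMem hsupp htinf, sub_zero, map_smul, hφf, smul_eq_mul, mul_one]

end Coordinates

theorem isometric_c0_copy_complemented_general
    (K : Type*) [TopologicalSpace K] [CompactSpace K]
    (X : Type*) [NormedAddCommGroup X] [NormedSpace ℝ X] [CompleteSpace X]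
    (V : ℕ → Set K) (hVdisj : Pairwise (Function.onFun Disjoint V))
    (f : ℕ → C(K, X)) (hnorm : ∀ n, ‖f n‖ = 1)
    (hsupp : ∀ n, ∀ k ∉ V n, f n k = 0)
    (t : ℕ → K) (ht : ∀ n, t n ∈ V n) (hft : ∀ n, ‖f n (t n)‖ = 1)
    (tinf : K) (htend : Tendsto t atTop (𝓝 tinf)) (htinf : tinf ∉ ⋃ n, V n) :
    ∃ J : ZeroAtInftyContinuousMap ℕ ℝ →L[ℝ] C(K, X),
      Isometry J ∧
      (∀ α : ZeroAtInftyContinuousMap ℕ ℝ, HasSum (fun n => α n • f n) (J α)) ∧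
      LinearMap.range (J : ZeroAtInftyContinuousMap ℕ ℝ →ₗ[ℝ] C(K, X)) = (Submodule.span ℝ (Set.range f)).topologicalClosure ∧
      ((Submodule.span ℝ (Set.range f)).topologicalClosure).ClosedComplemented := by
  have hf : ∀ n, ‖f n‖ ≤ 1 := fun n => (hnorm n).le
  choose φ hφ hφf using fun n =>
    exists_dual_vector ℝ (f n (t n)) (norm_ne_zero_iff.1 (by simp [hft n]))
  have hrange := range_c0SumCLM hVdisj hsupp hf ht hft
  refine ⟨c0SumCLM hVdisj hsupp hf, isometry_c0SumCLM hVdisj hsupp hf ht hft,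
    hasSum_c0SumCLM hVdisj hsupp hf, hrange, hrange ▸ ?_⟩
  exact (c0SumCLM hVdisj hsupp hf).closedComplemented_range_of_leftInverse
    (c0CoordCLM φ (fun n => (hφ n).le) htend)
    (c0CoordCLM_c0SumCLM hVdisj hsupp hf _ htend ht (fun n => by simp [hφf, hft]) htinf)

theorem isometric_c0_copy_complemented
    (K : Type*) [TopologicalSpace K] [CompactSpace K] [T2Space K]
    (X : Type*) [NormedAddCommGroup X] [NormedSpace ℝ X] [CompleteSpace X]
    (V : ℕ → Set K) (hVclopen : ∀ n, IsClopen (V n)) (hVdisj : Pairwise (Function.onFun Disjoint V))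
    (f : ℕ → C(K, X)) (hnorm : ∀ n, ‖f n‖ = 1)
    (hsupp : ∀ n, ∀ k ∉ V n, f n k = 0)
    (t : ℕ → K) (ht : ∀ n, t n ∈ V n) (hft : ∀ n, ‖f n (t n)‖ = 1)
    (tinf : K) (htend : Tendsto t atTop (𝓝 tinf)) (htinf : tinf ∉ ⋃ n, V n) :
    ∃ J : ZeroAtInftyContinuousMap ℕ ℝ →L[ℝ] C(K, X),
      Isometry J ∧
      (∀ α : ZeroAtInftyContinuousMap ℕ ℝ, HasSum (fun n => α n • f n) (J α)) ∧
      LinearMap.range (J : ZeroAtInftyContinuousMap ℕ ℝ →ₗ[ℝ] C(K, X)) = (Submodule.span ℝ (Set.range f)).topologicalClosure ∧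
      ((Submodule.span ℝ (Set.range f)).topologicalClosure).ClosedComplemented :=
  isometric_c0_copy_complemented_general K X V hVdisj f hnorm hsupp t ht hft tinf htend htinf
end

section
/- Let X be a real Banach space, let P : X → X be a continuous linear projection (P ∘ P = P), and let M be a closed subspace of X such that M ∩ ker P = {0} and P(M) is closed. Then the restriction of P to M is an isomorphism onto P(M); moreover, if N is a closed subspace of M and H is a closed subspace of the range of P such that range(P) = P(N) ⊕ H (a topological direct sum), then X = N ⊕ P⁻¹(H) (a topological direct sum); in particular, N is complemented in X. -/
/-! The restriction of `P` to `M` is a bounded bijection between Banach spaces, hence an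
isomorphism by the open mapping theorem. The complement is purely algebraic: writing
`P x = P n + h` with `n ∈ N`, `h ∈ H` puts `x - n` in `P⁻¹(H)`, and disjointness comes from
`M ∩ ker P = 0`. Since `P⁻¹(H)` is closed, the algebraic complement is a topological one. -/

open Submodule

namespace Submodule

variable {R R₂ M M₂ : Type*} [Ring R] [Ring R₂] [AddCommGroup M] [Module R M]
  [AddCommGroup M₂] [Module R₂ M₂] {τ₁₂ : R →+* R₂} [RingHomSurjective τ₁₂]

theorem comap_map_sup_eq (f : M →ₛₗ[τ₁₂] M₂) (p : Submodule R M) (q : Submodule R₂ M₂) :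
    comap f (map f p ⊔ q) = p ⊔ comap f q := by
  refine le_antisymm (fun x hx ↦ ?_)
    (sup_le (map_le_iff_le_comap.mp le_sup_left) (comap_mono le_sup_right))
  obtain ⟨_, ⟨y, hy, rfl⟩, z, hz, hfx⟩ := mem_sup.mp hx
  refine mem_sup.mpr ⟨y, hy, x - y, ?_, add_sub_cancel y x⟩
  rwa [mem_comap, map_sub, ← hfx, add_sub_cancel_left]

theorem disjoint_comap_of_disjoint_map {f : M →ₛₗ[τ₁₂] M₂} {p : Submodule R M}
    {q : Submodule R₂ M₂} (hker : Disjoint p (LinearMap.ker f)) (h : Disjoint (map f p) q) :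
    Disjoint p (comap f q) := by
  have hle : p ⊓ comap f q ≤ LinearMap.ker f := by
    rw [LinearMap.le_ker_iff_map, ← map_inf_eq_map_inf_comap, h.eq_bot]
  exact disjoint_iff_inf_le.mpr ((le_inf inf_le_left hle).trans hker.eq_bot.le)

theorem isCompl_comap_of_map_sup_eq_range {f : M →ₛₗ[τ₁₂] M₂} {p : Submodule R M}
    {q : Submodule R₂ M₂} (hker : Disjoint p (LinearMap.ker f)) (hdisj : Disjoint (map f p) q)
    (hsup : map f p ⊔ q = LinearMap.range f) : IsCompl p (comap f q) := by
  refine ⟨disjoint_comap_of_disjoint_map hker hdisj, codisjoint_iff.mpr ?_⟩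
  rw [← comap_map_sup_eq, hsup]
  exact eq_top_iff.mpr fun x _ ↦ LinearMap.mem_range_self f x

end Submodule

namespace ContinuousLinearMap

variable {𝕜 E F : Type*} [NontriviallyNormedField 𝕜] [NormedAddCommGroup E] [NormedSpace 𝕜 E]
  [NormedAddCommGroup F] [NormedSpace 𝕜 F]

noncomputable def equivMapOfDisjointKer (f : E →L[𝕜] F) (p : Submodule 𝕜 E) [CompleteSpace p]
    [CompleteSpace (p.map (f : E →ₗ[𝕜] F))] (h : Disjoint p (LinearMap.ker (f : E →ₗ[𝕜] F))) :
    p ≃L[𝕜] p.map (f : E →ₗ[𝕜] F) :=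
  .ofBijective ((f.comp p.subtypeL).codRestrict _ fun x ↦ mem_map_of_mem x.2)
    (by
      rw [LinearMap.ker_eq_bot']
      intro x hx
      exact Subtype.ext (LinearMap.disjoint_ker.mp h x x.2 (congrArg Subtype.val hx)))
    (by
      rw [LinearMap.range_eq_top]
      rintro ⟨_, x, hx, rfl⟩
      exact ⟨⟨x, hx⟩, rfl⟩)

@[simp]
theorem coe_equivMapOfDisjointKer_apply (f : E →L[𝕜] F) (p : Submodule 𝕜 E) [CompleteSpace p]
    [CompleteSpace (p.map (f : E →ₗ[𝕜] F))] (h : Disjoint p (LinearMap.ker (f : E →ₗ[𝕜] F)))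
    (x : p) :
    (f.equivMapOfDisjointKer p h x : F) = f x :=
  rfl

end ContinuousLinearMap

theorem projection_isomorphism_and_complement_general
    (X : Type*) [NormedAddCommGroup X] [NormedSpace ℝ X] [CompleteSpace X]
    (P : X →L[ℝ] X)
    (M : Submodule ℝ X) (hMclosed : IsClosed (M : Set X))
    (hMker : M ⊓ LinearMap.ker (P : X →ₗ[ℝ] X) = ⊥)
    (hPMclosed : IsClosed ((Submodule.map (P : X →ₗ[ℝ] X) M : Submodule ℝ X) : Set X)) :
    (∃ e : M ≃L[ℝ] (Submodule.map (P : X →ₗ[ℝ] X) M : Submodule ℝ X), ∀ x : M, (e x : X) = P x) ∧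
    ∀ N : Submodule ℝ X, N ≤ M → IsClosed (N : Set X) →
      ∀ H : Submodule ℝ X, H ≤ LinearMap.range (P : X →ₗ[ℝ] X) → IsClosed (H : Set X) →
        Submodule.map (P : X →ₗ[ℝ] X) N ⊓ H = ⊥ → Submodule.map (P : X →ₗ[ℝ] X) N ⊔ H = LinearMap.range (P : X →ₗ[ℝ] X) →
          IsCompl N (Submodule.comap (P : X →ₗ[ℝ] X) H) ∧ N.ClosedComplemented := by
  have hMdisj : Disjoint M (LinearMap.ker (P : X →ₗ[ℝ] X)) := disjoint_iff.mpr hMker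
  have : CompleteSpace M := hMclosed.completeSpace_coe
  have : CompleteSpace (M.map (P : X →ₗ[ℝ] X)) := hPMclosed.completeSpace_coe
  refine ⟨⟨P.equivMapOfDisjointKer M hMdisj, P.coe_equivMapOfDisjointKer_apply M hMdisj⟩, ?_⟩
  intro N hNM hNclosed H _ hHclosed hdisj hsup
  have hcompl : IsCompl N (comap (P : X →ₗ[ℝ] X) H) :=
    isCompl_comap_of_map_sup_eq_range (hMdisj.mono_left hNM) (disjoint_iff.mpr hdisj) hsup
  exact ⟨hcompl, .of_isCompl_isClosed hcompl hNclosed (hHclosed.preimage P.continuous)⟩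

theorem projection_isomorphism_and_complement
    (X : Type*) [NormedAddCommGroup X] [NormedSpace ℝ X] [CompleteSpace X]
    (P : X →L[ℝ] X) (hP : ∀ x, P (P x) = P x)
    (M : Submodule ℝ X) (hMclosed : IsClosed (M : Set X))
    (hMker : M ⊓ LinearMap.ker (P : X →ₗ[ℝ] X) = ⊥)
    (hPMclosed : IsClosed ((Submodule.map (P : X →ₗ[ℝ] X) M : Submodule ℝ X) : Set X)) :
    (∃ e : M ≃L[ℝ] (Submodule.map (P : X →ₗ[ℝ] X) M : Submodule ℝ X), ∀ x : M, (e x : X) = P x) ∧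
    ∀ N : Submodule ℝ X, N ≤ M → IsClosed (N : Set X) →
      ∀ H : Submodule ℝ X, H ≤ LinearMap.range (P : X →ₗ[ℝ] X) → IsClosed (H : Set X) →
        Submodule.map (P : X →ₗ[ℝ] X) N ⊓ H = ⊥ → Submodule.map (P : X →ₗ[ℝ] X) N ⊔ H = LinearMap.range (P : X →ₗ[ℝ] X) →
          IsCompl N (Submodule.comap (P : X →ₗ[ℝ] X) H) ∧ N.ClosedComplemented :=
  projection_isomorphism_and_complement_general X P M hMclosed hMker hPMclosed
end
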